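/- arXiv:2012.05849 — 2 statements merged into one kernel-verified Lean document; each statement's English description precedes it below -/
import Mathlib

section
/- Let U, Y₂, Y₃ take values in {1, 2}, and fix x. Suppose the conditional independence factorization pr(Y₂ = i, Y₃ = j | x) = Σ_{u=1}^{2} pr(Y₂ = i | u, x) · pr(Y₃ = j | u, x) · pr(u | x) holds, that pr(U = u | x) > 0 for u = 1, 2, and that U is not conditionally independent of Y₂ given x nor of Y₃ given x. Then the 2×2 matrix P with entries P_{ij} = pr(Y₂ = i, Y₃ = j | x) is invertible. -/
open Finset

theorem joint_matrix_invertible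
    (pY2 pY3 : Fin 2 → Fin 2 → ℝ) (pU : Fin 2 → ℝ)
    -- pY2 i u = pr(Y₂ = i | U = u, x), pY3 j u = pr(Y₃ = j | U = u, x), pU u = pr(U = u | x)
    (hY2nonneg : ∀ i u, 0 ≤ pY2 i u) (hY3nonneg : ∀ j u, 0 ≤ pY3 j u)
    (hY2sum : ∀ u, ∑ i, pY2 i u = 1) (hY3sum : ∀ u, ∑ j, pY3 j u = 1)
    (hUpos : ∀ u, 0 < pU u) (hUsum : ∑ u, pU u = 1)
    (hY2dep : pY2 0 0 ≠ pY2 0 1)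
    (hY3dep : pY3 0 0 ≠ pY3 0 1)
    (P : Matrix (Fin 2) (Fin 2) ℝ)
    (hP : ∀ i j, P i j = ∑ u, pY2 i u * pY3 j u * pU u) :
    P.det ≠ 0 := by
  have h2a := hY2sum 0
  have h2b := hY2sum 1
  have h3a := hY3sum 0
  have h3b := hY3sum 1
  simp [Fin.sum_univ_two] at h2a h2b h3a h3b
  have hdet : P.det = (pY2 0 0 - pY2 0 1) * (pY3 0 0 - pY3 0 1) * pU 0 * pU 1 := by
    rw [Matrix.det_fin_two, hP 0 0, hP 0 1, hP 1 0, hP 1 1]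
    simp only [Fin.sum_univ_two]
    have e2 : pY2 1 0 = 1 - pY2 0 0 := by linarith
    have e2' : pY2 1 1 = 1 - pY2 0 1 := by linarith
    have e3 : pY3 1 0 = 1 - pY3 0 0 := by linarith
    have e3' : pY3 1 1 = 1 - pY3 0 1 := by linarith
    rw [e2, e2', e3, e3']
    ring
  rw [hdet]
  have := hUpos 0
  have := hUpos 1
  have h2 : pY2 0 0 - pY2 0 1 ≠ 0 := sub_ne_zero.mpr hY2dep
  have h3 : pY3 0 0 - pY3 0 1 ≠ 0 := sub_ne_zero.mpr hY3dep
  positivity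
end

section
/- Let Γ be a p×(r+1) real matrix whose first column has exactly s nonzero entries (with p − s > r + 1), and suppose every (p−s+1)×(r+1) submatrix of Γ formed by selecting p−s+1 rows has full column rank r+1. Then for every orthogonal (r+1)×(r+1) matrix R, the first column of ΓR has at least s nonzero entries; i.e., min over orthogonal R of ‖(ΓR)_{·1}‖₀ equals s. -/
open Matrix

open Finset

theorem sparsest_rotation {p r s : ℕ}
    (Γ : Matrix (Fin p) (Fin (r + 1)) ℝ)
    (hs : (Finset.univ.filter (fun j : Fin p => Γ j 0 ≠ 0)).card = s)
    (hps : r + 1 < p - s)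
    (hfull : ∀ S : Finset (Fin p), S.card = p - s + 1 →
      (Γ.submatrix (fun i : {x // x ∈ S} => (i : Fin p)) id).rank = r + 1) :
    (∀ R : Matrix (Fin (r + 1)) (Fin (r + 1)) ℝ, Rᵀ * R = 1 →
      s ≤ (Finset.univ.filter (fun j : Fin p => (Γ * R) j 0 ≠ 0)).card) ∧
    (∃ R : Matrix (Fin (r + 1)) (Fin (r + 1)) ℝ, Rᵀ * R = 1 ∧
      (Finset.univ.filter (fun j : Fin p => (Γ * R) j 0 ≠ 0)).card = s) := by
  constructor
  · intro R hR
    by_contra hlt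
    push_neg at hlt
    -- the set of zero rows of (Γ*R) column 0 has card ≥ p - s + 1
    have hsle : s ≤ p := by
      rw [← hs]
      exact (Finset.card_filter_le _ _).trans (by simp)
    have hcardZ : p - s + 1 ≤ (Finset.univ.filter
        (fun j : Fin p => (Γ * R) j 0 = 0)).card := by
      have := Finset.card_filter_add_card_filter_not
        (s := (Finset.univ : Finset (Fin p)))
        (p := fun j : Fin p => (Γ * R) j 0 = 0)
      simp only [Finset.card_univ, Fintype.card_fin] at this
      simp only [ne_eq] at hlt
      omega
    obtain ⟨S, hSsub, hScard⟩ := Finset.exists_subset_card_eq hcardZ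
    have hrank := hfull S hScard
    set M := Γ.submatrix (fun i : {x // x ∈ S} => (i : Fin p)) id with hM
    -- M.mulVecLin is injective
    have hker : LinearMap.ker M.mulVecLin = ⊥ := by
      have h1 := LinearMap.finrank_range_add_finrank_ker M.mulVecLin
      have h2 : Module.finrank ℝ (Fin (r + 1) → ℝ) = r + 1 := by
        simp [Module.finrank_pi]
      rw [h2] at h1
      have : Module.finrank ℝ (LinearMap.ker M.mulVecLin) = 0 := by
        have : M.rank = Module.finrank ℝ (LinearMap.range M.mulVecLin) := rfl
        omega
      exact Submodule.finrank_eq_zero.mp this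
    -- first column of R is in the kernel
    have hx : M.mulVec (fun k => R k 0) = 0 := by
      funext i
      have hiz : (Γ * R) (i : Fin p) 0 = 0 := by
        have := hSsub i.2
        simpa using this
      simpa [M, Matrix.mulVec, Matrix.mul_apply, dotProduct] using hiz
    have hx0 : (fun k : Fin (r + 1) => R k 0) = 0 := by
      have : (fun k : Fin (r + 1) => R k 0) ∈ LinearMap.ker M.mulVecLin := hx
      rw [hker] at this
      simpa using this
    -- contradiction with orthogonality
    have h11 : (Rᵀ * R) 0 0 = 1 := by rw [hR]; simp
    rw [Matrix.mul_apply] at h11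
    have : (0 : ℝ) = 1 := by
      rw [← h11]
      refine (Finset.sum_eq_zero fun k _ => ?_).symm
      have : R k 0 = 0 := congrFun hx0 k
      simp [this]
    norm_num at this
  · exact ⟨1, by simp, by simpa using hs⟩
end
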